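/- Let α > 0 and let a, b : {1, 2, 3, …} → {0, 1} be two binary digit sequences. Fix n ≥ 1 with a_n = b_n. Then v_n = 2·cosh(α·2^(−n))·v_{n+1} + u_n. -/
import Mathlib


/-- The tail sum `Σ_{i=n}^∞ a_i·2^(−i)` of a binary digit sequence `a` (digits `a i ∈ {0,1}`). -/
noncomputable def binTail (a : ℕ → ℕ) (n : ℕ) : ℝ :=
  ∑' i : ℕ, (a (n + i) : ℝ) * 2 ^ (-((n : ℤ) + (i : ℤ)))

/-- `v_n = sinh(α·Σ_{i=n}^∞ a_i·2^(−i))·sinh(α·Σ_{i=n}^∞ (1 − b_i)·2^(−i))`. -/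
noncomputable def vSeq (α : ℝ) (a b : ℕ → ℕ) (n : ℕ) : ℝ :=
  Real.sinh (α * binTail a n) * Real.sinh (α * binTail (fun i => 1 - b i) n)

/-- `u_n = sinh(α·Σ_{i=n+1}^∞ a_i·2^(−i))·sinh(α·Σ_{i=n+1}^∞ b_i·2^(−i))` when `a_n = b_n = 0`,
`u_n = sinh(α·Σ_{i=n+1}^∞ (1−a_i)·2^(−i))·sinh(α·Σ_{i=n+1}^∞ (1−b_i)·2^(−i))` when
`a_n = b_n = 1` (only used when `a_n = b_n`). -/
noncomputable def uSeq (α : ℝ) (a b : ℕ → ℕ) (n : ℕ) : ℝ :=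
  if a n = 0 then
    Real.sinh (α * binTail a (n + 1)) * Real.sinh (α * binTail b (n + 1))
  else
    Real.sinh (α * binTail (fun i => 1 - a i) (n + 1)) *
      Real.sinh (α * binTail (fun i => 1 - b i) (n + 1))

lemma two_zpow_split (n i : ℕ) : (2:ℝ) ^ (-((n:ℤ)+(i:ℤ))) = 2 ^ (-(n:ℤ)) * (1/2)^i := by
  rw [neg_add, zpow_add₀ (by norm_num : (2:ℝ) ≠ 0)]
  congr 1
  rw [zpow_neg, zpow_natCast, ← inv_pow, one_div]

lemma binTail_summable (a : ℕ → ℕ) (ha : ∀ i, a i ≤ 1) (n : ℕ) :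
    Summable (fun i : ℕ => (a (n + i) : ℝ) * 2 ^ (-((n : ℤ) + (i : ℤ)))) := by
  have hg : Summable (fun i : ℕ => (2:ℝ)^(-(n:ℤ)) * (1/2)^i) :=
    (summable_geometric_of_lt_one (by norm_num) (by norm_num)).mul_left _
  have h0 : ∀ i : ℕ, 0 ≤ (a (n + i) : ℝ) * 2 ^ (-((n : ℤ) + (i : ℤ))) := by
    intro i; positivity
  have hle : ∀ i : ℕ, (a (n + i) : ℝ) * 2 ^ (-((n : ℤ) + (i : ℤ)))
      ≤ (2:ℝ)^(-(n:ℤ)) * (1/2)^i := by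
    intro i
    rw [two_zpow_split]
    have h1 : ((a (n+i) : ℝ)) ≤ 1 := by exact_mod_cast ha (n+i)
    have h2 : (0:ℝ) ≤ (2:ℝ)^(-(n:ℤ)) * (1/2:ℝ)^i := by positivity
    nlinarith
  exact Summable.of_nonneg_of_le h0 hle hg

lemma binTail_step (a : ℕ → ℕ) (ha : ∀ i, a i ≤ 1) (n : ℕ) :
    binTail a n = (a n : ℝ) * 2 ^ (-(n:ℤ)) + binTail a (n+1) := by
  unfold binTail
  rw [Summable.tsum_eq_zero_add (binTail_summable a ha n)]
  have h0 : (↑(a (n + 0)) : ℝ) * (2:ℝ) ^ (-((n:ℤ) + ((0:ℕ):ℤ))) = ↑(a n) * 2 ^ (-(n:ℤ)) := by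
    norm_num
  rw [h0]
  congr 1
  apply tsum_congr
  intro i
  have h1 : n + (i + 1) = n + 1 + i := by omega
  have h2 : (-((n:ℤ) + ((i+1:ℕ):ℤ))) = -(((n+1:ℕ):ℤ) + (i:ℤ)) := by push_cast; ring
  rw [h1, h2]

lemma binTail_ones (n : ℕ) : binTail (fun _ => 1) (n+1) = 2 ^ (-(n:ℤ)) := by
  unfold binTail
  calc (∑' i : ℕ, ((1:ℕ):ℝ) * 2 ^ (-(((n+1:ℕ):ℤ) + (i:ℤ))))
      = ∑' i : ℕ, 2 ^ (-((n+1:ℕ):ℤ)) * (1/2:ℝ)^i := by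
        apply tsum_congr; intro i; simp only [Nat.cast_one, one_mul]; exact two_zpow_split (n+1) i
    _ = 2 ^ (-((n+1:ℕ):ℤ)) * (1 - 1/2)⁻¹ := by
        rw [tsum_mul_left, tsum_geometric_of_lt_one (by norm_num) (by norm_num)]
    _ = 2 ^ (-(n:ℤ)) := by
        push_cast
        rw [neg_add, zpow_add₀ (by norm_num : (2:ℝ) ≠ 0)]
        norm_num
        ring

lemma binTail_compl (b : ℕ → ℕ) (hb : ∀ i, b i ≤ 1) (n : ℕ) :
    binTail b (n+1) + binTail (fun i => 1 - b i) (n+1) = 2 ^ (-(n:ℤ)) := by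
  have hb' : ∀ i, (1 - b i) ≤ 1 := fun i => Nat.sub_le 1 (b i)
  rw [← binTail_ones n]
  unfold binTail
  rw [← Summable.tsum_add (binTail_summable b hb (n+1)) (binTail_summable _ hb' (n+1))]
  apply tsum_congr
  intro i
  have h := hb (n+1+i)
  interval_cases h' : b (n+1+i) <;> simp

/-- For binary digit sequences `a, b` and `n ≥ 1` with `a_n = b_n`, the recurrence
`v_n = 2·cosh(α·2^(−n))·v_{n+1} + u_n` holds. -/
theorem v_recurrence (α : ℝ) (hα : 0 < α) (a b : ℕ → ℕ)
    (ha : ∀ i, a i ≤ 1) (hb : ∀ i, b i ≤ 1) (n : ℕ) (hn : 1 ≤ n) (hab : a n = b n) :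
    vSeq α a b n = 2 * Real.cosh (α * 2 ^ (-(n : ℤ))) * vSeq α a b (n + 1) + uSeq α a b n := by
  have ha' : ∀ i, (1 - a i) ≤ 1 := fun i => Nat.sub_le 1 (a i)
  have hb' : ∀ i, (1 - b i) ≤ 1 := fun i => Nat.sub_le 1 (b i)
  set t := (2:ℝ) ^ (-(n:ℤ)) with ht
  have key : ∀ x y : ℝ,
      Real.sinh (x + y) = 2 * Real.cosh x * Real.sinh y + Real.sinh (x - y) := by
    intro x y
    rw [Real.sinh_add, Real.sinh_sub, Real.cosh_eq, Real.sinh_eq]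
    ring
  have hsa := binTail_step a ha n
  have hsb' := binTail_step (fun i => 1 - b i) hb' n
  have hca := binTail_compl a ha n
  have hcb := binTail_compl b hb n
  rcases Nat.le_one_iff_eq_zero_or_eq_one.mp (ha n) with h0 | h1
  · -- a n = b n = 0
    have hb0 : b n = 0 := hab ▸ h0
    unfold vSeq uSeq
    rw [if_pos h0, hsa, hsb', h0]
    simp only [hb0]
    have e1 : α * (((0:ℕ):ℝ) * t + binTail a (n+1)) = α * binTail a (n+1) := by
      push_cast; ring
    have e2 : α * (((1-0:ℕ):ℝ) * t + binTail (fun i => 1 - b i) (n+1))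
        = α * t + α * binTail (fun i => 1 - b i) (n+1) := by
      norm_num; ring
    rw [e1, e2, key (α * t) (α * binTail (fun i => 1 - b i) (n+1))]
    have e3 : α * t - α * binTail (fun i => 1 - b i) (n+1) = α * binTail b (n+1) := by
      have : binTail b (n+1) = t - binTail (fun i => 1 - b i) (n+1) := by linarith [hcb]
      rw [this]; ring
    rw [e3]
    ring
  · -- a n = b n = 1
    have hb1 : b n = 1 := hab ▸ h1
    unfold vSeq uSeq
    rw [if_neg (by omega), hsa, hsb', h1]
    simp only [hb1]
    have e1 : α * (((1:ℕ):ℝ) * t + binTail a (n+1))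
        = α * t + α * binTail a (n+1) := by push_cast; ring
    have e2 : α * (((1-1:ℕ):ℝ) * t + binTail (fun i => 1 - b i) (n+1))
        = α * binTail (fun i => 1 - b i) (n+1) := by norm_num
    rw [e1, e2, key (α * t) (α * binTail a (n+1))]
    have e3 : α * t - α * binTail a (n+1) = α * binTail (fun i => 1 - a i) (n+1) := by
      have : binTail (fun i => 1 - a i) (n+1) = t - binTail a (n+1) := by linarith [hca]
      rw [this]; ring
    rw [e3]
    ring
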